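/- arXiv:1708.09237 — 6 statements merged into one kernel-verified Lean document; each statement's English description precedes it below -/
import Mathlib

section
/- Let A be an n×n real matrix and x, z ∈ ℝⁿ, and let B be the (n+1)×(n+1) bordered matrix B = [[A − z xᵀ, z],[xᵀ(A − z xᵀ), xᵀ z]]. Then the characteristic polynomial of B equals X times the characteristic polynomial of A, i.e., charpoly(B) = X · charpoly(A). -/
open Matrix Polynomial

lemma charpoly_conj_aux {m : Type*} [DecidableEq m] [Fintype m]
    (P C Q : Matrix m m ℝ) (hPQ : P * Q = 1) (hQP : Q * P = 1) :
    (P * C * Q).charpoly = C.charpoly := by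
  have hmap : (P.map Polynomial.C) * (Q.map Polynomial.C) = 1 := by
    rw [← Matrix.map_mul, hPQ, Matrix.map_one _ (by simp) (by simp)]
  have hcm : charmatrix (P * C * Q)
      = (P.map Polynomial.C) * charmatrix C * (Q.map Polynomial.C) := by
    rw [charmatrix]
    rw [charmatrix]
    rw [Matrix.mul_sub, Matrix.sub_mul]
    congr 1
    · have hsc : (Matrix.scalar m) (X : ℝ[X]) = (X : ℝ[X]) • (1 : Matrix m m ℝ[X]) := by
        ext i j
        simp [Matrix.scalar_apply, Matrix.smul_apply, Matrix.one_apply, Matrix.diagonal,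
          Matrix.of_apply]
      rw [hsc, Matrix.mul_smul, Matrix.mul_one, Matrix.smul_mul, hmap]
    · simp [Matrix.map_mul, mul_assoc]
  have hdet : (P.map Polynomial.C).det * (Q.map Polynomial.C).det = 1 := by
    rw [← Matrix.det_mul, hmap, Matrix.det_one]
  rw [Matrix.charpoly, Matrix.charpoly, hcm, Matrix.det_mul, Matrix.det_mul]
  ring_nf
  rw [mul_comm ((P.map Polynomial.C).det), mul_assoc, hdet, mul_one]

/-- The characteristic polynomial of the bordered matrix
`B = [[A − z xᵀ, z],[xᵀ(A − z xᵀ), xᵀ z]]` equals `X` times that of `A`. -/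
theorem statement1 {n : ℕ} (A : Matrix (Fin n) (Fin n) ℝ) (x z : Fin n → ℝ) :
    (Matrix.fromBlocks (A - Matrix.vecMulVec z x) (Matrix.of fun i (_ : Unit) => z i)
      (Matrix.of fun _ : Unit => x ᵥ* (A - Matrix.vecMulVec z x))
      (Matrix.of fun _ _ : Unit => x ⬝ᵥ z)).charpoly = Polynomial.X * A.charpoly := by
  set P : Matrix (Fin n ⊕ Unit) (Fin n ⊕ Unit) ℝ :=
    Matrix.fromBlocks 1 0 (Matrix.of fun _ : Unit => x) 1 with hP
  set Q : Matrix (Fin n ⊕ Unit) (Fin n ⊕ Unit) ℝ :=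
    Matrix.fromBlocks 1 0 (Matrix.of fun _ : Unit => -x) 1 with hQ
  set C : Matrix (Fin n ⊕ Unit) (Fin n ⊕ Unit) ℝ :=
    Matrix.fromBlocks A (Matrix.of fun i (_ : Unit) => z i) 0 0 with hC
  have hPQ : P * Q = 1 := by
    rw [hP, hQ, Matrix.fromBlocks_multiply]
    simp [← Matrix.fromBlocks_one]
    ext i j
    simp [Matrix.add_apply, Matrix.mul_apply]
  have hQP : Q * P = 1 := by
    rw [hP, hQ, Matrix.fromBlocks_multiply]
    simp [← Matrix.fromBlocks_one]
    ext i j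
    simp [Matrix.add_apply, Matrix.mul_apply]
  have hB : Matrix.fromBlocks (A - Matrix.vecMulVec z x) (Matrix.of fun i (_ : Unit) => z i)
      (Matrix.of fun _ : Unit => x ᵥ* (A - Matrix.vecMulVec z x))
      (Matrix.of fun _ _ : Unit => x ⬝ᵥ z) = P * C * Q := by
    rw [hP, hQ, hC, Matrix.fromBlocks_multiply, Matrix.fromBlocks_multiply]
    ext (i | i) (j | j) <;>
      simp [Matrix.mul_apply, Matrix.sub_apply, Matrix.add_apply, Matrix.vecMulVec_apply,
        Matrix.vecMul, dotProduct, Finset.sum_sub_distrib, Finset.mul_sum,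
        Finset.sum_mul, sub_eq_add_neg, mul_comm, mul_left_comm, mul_assoc]
    rw [← Finset.sum_neg_distrib, ← Finset.sum_add_distrib]
    exact Finset.sum_congr rfl fun k _ => by ring
  rw [hB, charpoly_conj_aux P C Q hPQ hQP, hC,
    Matrix.charpoly_fromBlocks_zero₂₁]
  have h0 : (0 : Matrix Unit Unit ℝ).charpoly = Polynomial.X := by
    rw [Matrix.charpoly]
    rw [Matrix.det_unique]
    simp [charmatrix]
  rw [h0, mul_comm]
end

section
/- Let A be an n×n real matrix and x, z ∈ ℝⁿ, and let B be the (n+1)×(n+1) bordered matrix B = [[A − z xᵀ, z],[xᵀ(A − z xᵀ), xᵀ z]]. If A is nilpotent, then B is nilpotent. -/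
open Matrix

lemma aux_pow {m k : Type*} [Fintype m] [Fintype k] [DecidableEq m] [DecidableEq k]
    (P : Matrix m k ℝ) (Q : Matrix k m ℝ) (N : ℕ) :
    (P * Q) ^ (N + 1) = P * (Q * P) ^ N * Q := by
  induction N with
  | zero => simp [Matrix.mul_assoc]
  | succ N ih =>
      rw [pow_succ, ih, pow_succ]
      simp only [Matrix.mul_assoc]

lemma aux_nilp {m k : Type*} [Fintype m] [Fintype k] [DecidableEq m] [DecidableEq k]
    (P : Matrix m k ℝ) (Q : Matrix k m ℝ) (h : IsNilpotent (Q * P)) :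
    IsNilpotent (P * Q) := by
  obtain ⟨N, hN⟩ := h
  exact ⟨N + 1, by rw [aux_pow, hN]; simp⟩

/-- If `A` is nilpotent, so is the bordered matrix
`B = [[A − z xᵀ, z],[xᵀ(A − z xᵀ), xᵀ z]]`. -/
theorem statement2 {n : ℕ} (A : Matrix (Fin n) (Fin n) ℝ) (x z : Fin n → ℝ)
    (hA : IsNilpotent A) :
    IsNilpotent
      (Matrix.fromBlocks (A - Matrix.vecMulVec z x) (Matrix.of fun i (_ : Unit) => z i)
        (Matrix.of fun _ : Unit => x ᵥ* (A - Matrix.vecMulVec z x))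
        (Matrix.of fun _ _ : Unit => x ⬝ᵥ z)) := by
  set M := A - Matrix.vecMulVec z x with hM
  set P : Matrix (Fin n ⊕ Unit) (Fin n) ℝ :=
    Matrix.of (fun i j => Sum.elim (fun i' => (1 : Matrix (Fin n) (Fin n) ℝ) i' j)
      (fun _ => x j) i) with hP
  set Q : Matrix (Fin n) (Fin n ⊕ Unit) ℝ :=
    Matrix.of (fun i j => Sum.elim (fun j' => M i j') (fun _ => z i) j) with hQ
  have hQP : Q * P = A := by
    ext i j
    simp [hP, hQ, Matrix.mul_apply, Fintype.sum_sum_type, Matrix.one_apply, hM,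
      Matrix.vecMulVec_apply, mul_comm]
  have hPQ : Matrix.fromBlocks M (Matrix.of fun i (_ : Unit) => z i)
      (Matrix.of fun _ : Unit => x ᵥ* M)
      (Matrix.of fun _ _ : Unit => x ⬝ᵥ z) = P * Q := by
    ext i j
    cases i <;> cases j <;>
      simp [hP, hQ, Matrix.mul_apply, Matrix.one_apply, Matrix.vecMul, dotProduct,
        mul_comm]
  rw [hPQ]
  exact aux_nilp P Q (hQP ▸ hA)
end

section
/- Let σ be an order-n sign pattern and let A ∈ Q(σ) be a nilpotent matrix that allows a full-rank Jacobian. Then A is irreducible; that is, there is no nonempty proper subset S of the row/column index set such that A i j = 0 for all i ∈ S and all j ∉ S (equivalently, no simultaneous permutation of rows and columns puts A in block triangular form with more than one nonempty diagonal block). -/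
open Matrix Polynomial

/-- The qualitative class of a sign pattern `σ`: real matrices whose entrywise sign is `σ`. -/
def Qclass {n : ℕ} (σ : Matrix (Fin n) (Fin n) ℝ) : Set (Matrix (Fin n) (Fin n) ℝ) :=
  {A | ∀ i j, Real.sign (A i j) = σ i j}

/-- The sign pattern of a real matrix. -/
noncomputable def signPattern {n : ℕ} (B : Matrix (Fin n) (Fin n) ℝ) : Matrix (Fin n) (Fin n) ℝ :=
  Matrix.of fun i j => Real.sign (B i j)

/-- `σ'` is a superpattern of `σ`. -/
def Superpattern {n : ℕ} (σ' σ : Matrix (Fin n) (Fin n) ℝ) : Prop :=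
  ∀ i j, σ i j ≠ 0 → σ' i j = σ i j

/-- A sign pattern is spectrally arbitrary if every monic real polynomial of degree `n`
is the characteristic polynomial of some realization. -/
def SpectrallyArbitrary {n : ℕ} (σ : Matrix (Fin n) (Fin n) ℝ) : Prop :=
  ∀ p : Polynomial ℝ, p.Monic → p.natDegree = n → ∃ A ∈ Qclass σ, A.charpoly = p

/-- The matrix obtained from `A` by replacing the entries in positions `S` by the variables `x`. -/
def matWithVars {n : ℕ} (A : Matrix (Fin n) (Fin n) ℝ) (S : Finset (Fin n × Fin n))
    (x : S → ℝ) : Matrix (Fin n) (Fin n) ℝ :=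
  Matrix.of fun i j => if h : (i, j) ∈ S then x ⟨(i, j), h⟩ else A i j

/-- The coefficient vector `(f_1, …, f_n)` where
`charpoly (matWithVars A S x) = z^n + f_1 z^(n-1) + ⋯ + f_n`. -/
noncomputable def coeffVec {n : ℕ} (A : Matrix (Fin n) (Fin n) ℝ) (S : Finset (Fin n × Fin n))
    (x : S → ℝ) : Fin n → ℝ :=
  fun i => (matWithVars A S x).charpoly.coeff (n - 1 - (i : ℕ))

/-- `A ∈ Q(σ)` allows a full-rank Jacobian: for some set `S` of positions where `σ` is nonzero,
the Fréchet derivative at `A` of the coefficient map is surjective. -/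
def AllowsFullRankJacobian {n : ℕ} (σ A : Matrix (Fin n) (Fin n) ℝ) : Prop :=
  ∃ S : Finset (Fin n × Fin n), (∀ p ∈ S, σ p.1 p.2 ≠ 0) ∧
    ∃ L : (↥S → ℝ) →L[ℝ] (Fin n → ℝ),
      HasFDerivAt (coeffVec A S) L (fun p => A p.1.1 p.1.2) ∧ Function.Surjective L

/-!
If `A` is reducible, say `A i j = 0` for `i ∈ T`, `j ∉ T`, then so is every matrix `X_S x`, since
`S` only contains positions where `A` is nonzero. Hence `det (X_S x)` factors as the product of the
determinants of the two diagonal blocks. At `x = x_A` both factors vanish, because the diagonal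
blocks of a nilpotent block triangular matrix are nilpotent, so the product has zero derivative
there. As `f_n = (-1)^n det`, the last row of the Jacobian is zero and the Jacobian is not
surjective.
-/

namespace Matrix

variable {α m R : Type*}

theorem blockTriangular_decide_mem [Zero R] {M : Matrix m m R} (T : Set m) [DecidablePred (· ∈ T)]
    (hM : ∀ i ∈ T, ∀ j ∉ T, M i j = 0) : M.BlockTriangular fun i => decide (i ∈ T) := by
  intro i j hij
  simp only [Bool.lt_iff, decide_eq_false_iff_not, decide_eq_true_eq] at hij
  exact hM i hij.2 j hij.1

variable [LinearOrder α] [Fintype m] {b : m → α}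

theorem BlockTriangular.toSquareBlock_mul [NonUnitalNonAssocSemiring R] {M N : Matrix m m R}
    (hM : M.BlockTriangular b) (hN : N.BlockTriangular b) (a : α) :
    (M * N).toSquareBlock b a = M.toSquareBlock b a * N.toSquareBlock b a := by
  classical
  ext ⟨i, hi⟩ ⟨j, hj⟩
  simp only [toSquareBlock_def, of_apply, mul_apply]
  have hout : ∑ k : {k // ¬b k = a}, M i k * N k j = 0 := by
    refine Finset.sum_eq_zero fun ⟨k, hk⟩ _ => ?_
    rcases lt_or_gt_of_ne hk with hlt | hgt
    · rw [hM (hi ▸ hlt), zero_mul]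
    · rw [hN (hj ▸ hgt), mul_zero]
  rw [← Fintype.sum_subtype_add_sum_subtype (fun k => b k = a), hout, add_zero]

theorem BlockTriangular.toSquareBlock_pow [DecidableEq m] [Semiring R] {M : Matrix m m R}
    (hM : M.BlockTriangular b) (a : α) (k : ℕ) :
    (M ^ k).toSquareBlock b a = M.toSquareBlock b a ^ k := by
  induction k with
  | zero => ext; simp [toSquareBlock_def, one_apply, Subtype.ext_iff]
  | succ k ih => rw [pow_succ, (hM.pow k).toSquareBlock_mul hM, ih, pow_succ]

theorem BlockTriangular.isNilpotent_toSquareBlock [DecidableEq m] [Semiring R]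
    {M : Matrix m m R} (hM : M.BlockTriangular b) (hnil : IsNilpotent M) (a : α) :
    IsNilpotent (M.toSquareBlock b a) := by
  obtain ⟨k, hk⟩ := hnil
  exact ⟨k, by rw [← hM.toSquareBlock_pow, hk]; rfl⟩

theorem det_eq_zero_of_isNilpotent {n : Type*} [Fintype n] [DecidableEq n] [Nonempty n]
    [CommRing R] [IsReduced R] {M : Matrix n n R} (hM : IsNilpotent M) : M.det = 0 := by
  obtain ⟨k, hk⟩ := hM
  exact IsReduced.eq_zero _ ⟨k, by rw [← det_pow, hk, det_zero]⟩

end Matrix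

section Calculus

variable {𝕜 E : Type*} [NontriviallyNormedField 𝕜] [NormedAddCommGroup E] [NormedSpace 𝕜 E]
  {x : E}

theorem DifferentiableAt.matrix_det {n : Type*} [Fintype n] [DecidableEq n] {F : E → Matrix n n 𝕜}
    (hF : ∀ i j, DifferentiableAt 𝕜 (fun y => F y i j) x) :
    DifferentiableAt 𝕜 (fun y => (F y).det) x := by
  simp only [det_apply']
  fun_prop

theorem hasFDerivAt_mul_zero_of_eq_zero {f g : E → 𝕜} (hf : DifferentiableAt 𝕜 f x)
    (hg : DifferentiableAt 𝕜 g x) (hfx : f x = 0) (hgx : g x = 0) :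
    HasFDerivAt (fun y => f y * g y) (0 : E →L[𝕜] 𝕜) x := by
  refine (hf.hasFDerivAt.mul hg.hasFDerivAt).congr_fderiv ?_
  rw [hfx, hgx]
  ext v
  simp

theorem HasFDerivAt.not_surjective_of_hasFDerivAt_apply_zero {ι : Type*} [Fintype ι]
    {f : E → ι → 𝕜} {L : E →L[𝕜] ι → 𝕜} (hf : HasFDerivAt f L x) (i : ι)
    (hfi : HasFDerivAt (fun y => f y i) (0 : E →L[𝕜] 𝕜) x) : ¬ Function.Surjective L := by
  classical
  intro hL
  let πᵢ : (ι → 𝕜) →L[𝕜] 𝕜 := ContinuousLinearMap.proj i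
  have hLi : πᵢ.comp L = 0 := (πᵢ.hasFDerivAt.comp x hf).unique hfi
  obtain ⟨v, hv⟩ := hL (Pi.single i 1)
  simpa [πᵢ, hv] using congrArg (· v) hLi

end Calculus

theorem hasFDerivAt_det_zero_of_blockTriangular {𝕜 E m : Type*} [NontriviallyNormedField 𝕜]
    [NormedAddCommGroup E] [NormedSpace 𝕜 E] [Fintype m] [DecidableEq m]
    {F : E → Matrix m m 𝕜} {b : m → Bool} {x : E} (hb : Function.Surjective b)
    (hF : ∀ y, (F y).BlockTriangular b) (hFx : ∀ i j, DifferentiableAt 𝕜 (fun y => F y i j) x)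
    (hnil : IsNilpotent (F x)) :
    HasFDerivAt (fun y => (F y).det) (0 : E →L[𝕜] 𝕜) x := by
  have hblock (a : Bool) : DifferentiableAt 𝕜 (fun y => (F y).toSquareBlock b a |>.det) x ∧
      ((F x).toSquareBlock b a).det = 0 := by
    have : Nonempty {i // b i = a} := let ⟨i, hi⟩ := hb a; ⟨⟨i, hi⟩⟩
    exact ⟨DifferentiableAt.matrix_det fun i j => hFx i j,
      det_eq_zero_of_isNilpotent ((hF x).isNilpotent_toSquareBlock hnil a)⟩
  simp_rw [fun y => (hF y).det_fintype, Fintype.prod_bool]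
  exact hasFDerivAt_mul_zero_of_eq_zero (hblock true).1 (hblock false).1 (hblock true).2
    (hblock false).2

section MatWithVars

variable {n : ℕ} (A : Matrix (Fin n) (Fin n) ℝ) (S : Finset (Fin n × Fin n))

theorem matWithVars_self : matWithVars A S (fun p => A p.1.1 p.1.2) = A := by
  ext i j
  simp [matWithVars]

theorem differentiable_matWithVars_apply (i j : Fin n) :
    Differentiable ℝ (fun x => matWithVars A S x i j) := by
  by_cases h : (i, j) ∈ S
  · simpa [matWithVars, h] using differentiable_apply (𝕜 := ℝ) (⟨(i, j), h⟩ : S)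
  · simp [matWithVars, h]

theorem blockTriangular_matWithVars {α : Type*} [LT α] {b : Fin n → α} (hA : A.BlockTriangular b)
    (hS : ∀ p ∈ S, A p.1 p.2 ≠ 0) (x : S → ℝ) : (matWithVars A S x).BlockTriangular b := by
  intro i j hij
  have h : (i, j) ∉ S := fun hmem => hS _ hmem (hA hij)
  simp [matWithVars, h, hA hij]

theorem coeffVec_last (hn : 0 < n) (x : S → ℝ) :
    coeffVec A S x ⟨n - 1, Nat.sub_lt hn one_pos⟩ = (-1) ^ n * (matWithVars A S x).det := by
  rw [det_eq_sign_charpoly_coeff, Fintype.card_fin, ← mul_assoc, ← mul_pow]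
  simp [coeffVec]

end MatWithVars

/-- A nilpotent realization of a sign pattern allowing a full-rank Jacobian
is irreducible. -/
theorem statement3 {n : ℕ} (σ A : Matrix (Fin n) (Fin n) ℝ)
    (hA : A ∈ Qclass σ) (hnil : IsNilpotent A) (hJ : AllowsFullRankJacobian σ A) :
    ¬ ∃ S : Set (Fin n), S.Nonempty ∧ S ≠ Set.univ ∧
        ∀ i ∈ S, ∀ j, j ∉ S → A i j = 0 := by
  classical
  rintro ⟨T, ⟨i₀, hi₀⟩, hT, hA₀⟩
  obtain ⟨S, hSσ, L, hL, hLsurj⟩ := hJ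
  obtain ⟨j₀, hj₀⟩ := (Set.ne_univ_iff_exists_notMem T).mp hT
  have hS : ∀ p ∈ S, A p.1 p.2 ≠ 0 := fun p hp hAp => hSσ p hp (by rw [← hA, hAp, Real.sign_zero])
  have hb : Function.Surjective fun i => decide (i ∈ T)
    | false => ⟨j₀, by simpa⟩
    | true => ⟨i₀, by simpa⟩
  have hdet := hasFDerivAt_det_zero_of_blockTriangular hb
    (blockTriangular_matWithVars A S (blockTriangular_decide_mem T hA₀) hS)
    (fun i j => (differentiable_matWithVars_apply A S i j).differentiableAt)
    (by rwa [matWithVars_self])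
  refine hL.not_surjective_of_hasFDerivAt_apply_zero ⟨n - 1, Nat.sub_lt (Fin.pos i₀) one_pos⟩ ?_
    hLsurj
  simp_rw [coeffVec_last A S (Fin.pos i₀)]
  simpa using hdet.const_mul ((-1) ^ n)
end

section
/- Let A = [a_{ij}] be an n×n real matrix with a_{kk} ≠ 0 for some index k, and let B be the (n+1)×(n+1) matrix B = [[A − a_{kk} P_{kk}, e_k],[a_{kk} r_k(A − a_{kk} P_{kk}), a_{kk}]], where P_{kk} has 1 in entry (k,k) and zeros elsewhere, e_k is the k-th standard basis column vector, and r_k(·) is the k-th row. Then for every column index v ≤ n, det(B(n+1, v)) = (−1)^{n+k} det(A(k, v)). In particular, if det(A(k,v)) ≠ 0 then det(B(n+1,v)) ≠ 0. -/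
/-!
Deleting the last row of `B` and the column `v` leaves a matrix whose last column is `e_k`, so
Laplace expansion along that column gives `±` the minor at `(k, last)`. Removing row `k` also
removes the only entry where `A − a_kk P_kk` differs from `A`, so this minor is `A(k, v)`.
-/

open Matrix

/-- The bordered matrix `B = [[A − a_kk P_kk, e_k],[a_kk r_k(A − a_kk P_kk), a_kk]]`. -/
def borderEq {n : ℕ} (A : Matrix (Fin (n+1)) (Fin (n+1)) ℝ) (k : Fin (n+1)) :
    Matrix (Fin (n+2)) (Fin (n+2)) ℝ :=
  Matrix.of fun i j =>
    Fin.lastCases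
      (Fin.lastCases (A k k)
        (fun j' => A k k * (A - Matrix.single k k (A k k)) k j') j)
      (fun i' => Fin.lastCases (if i' = k then 1 else 0)
        (fun j' => (A - Matrix.single k k (A k k)) i' j') j)
      i

theorem Matrix.det_eq_neg_one_pow_mul_det_submatrix_of_col_eq_single {R : Type*} [CommRing R]
    {n : ℕ} (M : Matrix (Fin (n+1)) (Fin (n+1)) R) (i j : Fin (n+1))
    (hcol : ∀ r, M r j = if r = i then 1 else 0) :
    M.det = (-1) ^ ((i : ℕ) + j) * (M.submatrix i.succAbove j.succAbove).det := by
  rw [det_succ_column M j, Finset.sum_eq_single i]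
  · simp [hcol]
  · intro r _ hr
    simp [hcol, hr]
  · simp

section borderEq

variable {n : ℕ} (A : Matrix (Fin (n+1)) (Fin (n+1)) ℝ) (k v : Fin (n+1))

theorem borderEq_submatrix_apply_last (i : Fin (n+1)) :
    (borderEq A k).submatrix (Fin.last (n+1)).succAbove v.castSucc.succAbove i (Fin.last n)
      = if i = k then 1 else 0 := by
  simp [borderEq, Fin.succAbove_ne_last_last (Fin.castSucc_ne_last v)]

theorem borderEq_submatrix_submatrix_last :
    ((borderEq A k).submatrix (Fin.last (n+1)).succAbove v.castSucc.succAbove).submatrix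
        k.succAbove (Fin.last n).succAbove = A.submatrix k.succAbove v.succAbove := by
  ext i j
  simp [borderEq, Fin.castSucc_succAbove_castSucc, Matrix.single, (Fin.succAbove_ne k i).symm]

theorem det_borderEq_submatrix :
    ((borderEq A k).submatrix (Fin.last (n+1)).succAbove v.castSucc.succAbove).det
      = (-1 : ℝ) ^ ((n + 1) + ((k : ℕ) + 1)) * (A.submatrix k.succAbove v.succAbove).det := by
  rw [det_eq_neg_one_pow_mul_det_submatrix_of_col_eq_single _ k (Fin.last n)
      (borderEq_submatrix_apply_last A k v), borderEq_submatrix_submatrix_last, Fin.val_last,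
    show n + 1 + (k + 1) = k + n + 2 by omega]
  ring

end borderEq

theorem statement8_general {n : ℕ} (A : Matrix (Fin (n+1)) (Fin (n+1)) ℝ) (k : Fin (n+1))
    (v : Fin (n+1)) :
    ((borderEq A k).submatrix (Fin.last (n+1)).succAbove (v.castSucc).succAbove).det
        = (-1 : ℝ) ^ ((n + 1) + ((k : ℕ) + 1)) *
          (A.submatrix k.succAbove v.succAbove).det ∧
      ((A.submatrix k.succAbove v.succAbove).det ≠ 0 →
        ((borderEq A k).submatrix (Fin.last (n+1)).succAbove (v.castSucc).succAbove).det ≠ 0) := by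
  refine ⟨det_borderEq_submatrix A k v, fun hA => ?_⟩
  rw [det_borderEq_submatrix]
  exact mul_ne_zero (pow_ne_zero _ (neg_ne_zero.mpr one_ne_zero)) hA

/-- For the bordered matrix `B` of order `N+1` obtained from `A` of order `N`
(here `N = n+1`, with 1-based paper indices `k ↦ (k:ℕ)+1`),
`det (B(N+1, v)) = (−1)^(N + k) det (A(k, v))`; in particular the left side is nonzero whenever
`det (A(k,v))` is. -/
theorem statement8 {n : ℕ} (A : Matrix (Fin (n+1)) (Fin (n+1)) ℝ) (k : Fin (n+1))
    (hkk : A k k ≠ 0) (v : Fin (n+1)) :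
    ((borderEq A k).submatrix (Fin.last (n+1)).succAbove (v.castSucc).succAbove).det
        = (-1 : ℝ) ^ ((n + 1) + ((k : ℕ) + 1)) *
          (A.submatrix k.succAbove v.succAbove).det ∧
      ((A.submatrix k.succAbove v.succAbove).det ≠ 0 →
        ((borderEq A k).submatrix (Fin.last (n+1)).succAbove (v.castSucc).succAbove).det ≠ 0) :=
  statement8_general A k v
end

section
/- Let M be an n×n matrix over a commutative ring, with n ≥ 2, let b be a scalar, and let y_1, …, y_n be scalars. Define the (n+1)×(n+1) matrix B by: B i j = M i j for i, j ≤ n with (i,j) ≠ (1,n); B 1 n = M 1 n − b; B 1 (n+1) = 1; B i (n+1) = 0 for 2 ≤ i ≤ n; B (n+1) j = y_j for j ≤ n; and B (n+1)(n+1) = 0. Then charpoly(B)(z) = z · charpoly(M)(z) + (−1)^{n+1} z b · det((zI_n − M)(1, n)) + Σ_{ℓ=1}^{n} (−1)^{ℓ} y_ℓ · det((zI_n − M)(1, ℓ)), where (zI_n − M)(1, ℓ) denotes the (n−1)×(n−1) matrix obtained from zI_n − M by deleting row 1 and column ℓ. -/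
open Matrix Polynomial

/-- For the bordered matrix `B` of order `n+1` (with `n = m+2 ≥ 2`) obtained from
`M` by replacing the `(1,n)` entry with `M 1 n − b`, placing a `1` in position `(1, n+1)`,
zeros below it, and the scalars `y_1, …, y_n, 0` in the last row:
`charpoly B = z·charpoly M + (−1)^{n+1} z b · det((zI−M)(1,n))
  + Σ_{ℓ=1}^{n} (−1)^{ℓ} y_ℓ · det((zI−M)(1,ℓ))`. -/
theorem statement10 {R : Type*} [CommRing R] (m : ℕ)
    (M : Matrix (Fin (m+2)) (Fin (m+2)) R) (b : R) (y : Fin (m+2) → R) :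
    (Matrix.of fun i j : Fin (m+3) =>
        Fin.lastCases
          -- last row: `y_1, …, y_n, 0`
          (Fin.lastCases (0 : R) (fun j' : Fin (m+2) => y j') j)
          -- first `n` rows: `M` with the `(1,n)` entry replaced by `M 1 n − b`,
          -- and last column `e₁`
          (fun i' : Fin (m+2) =>
            Fin.lastCases (if i' = (0 : Fin (m+2)) then (1 : R) else 0)
              (fun j' : Fin (m+2) =>
                if i' = (0 : Fin (m+2)) ∧ j' = Fin.last (m+1) then M i' j' - b else M i' j') j)
          i).charpoly
      = Polynomial.X * M.charpoly +
        (-1 : Polynomial R) ^ ((m + 2) + 1) * Polynomial.X * Polynomial.C b *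
          ((Matrix.charmatrix M).submatrix
            (0 : Fin (m+2)).succAbove (Fin.last (m+1)).succAbove).det +
        ∑ ℓ : Fin (m+2),
          (-1 : Polynomial R) ^ ((ℓ : ℕ) + 1) * Polynomial.C (y ℓ) *
            ((Matrix.charmatrix M).submatrix
              (0 : Fin (m+2)).succAbove ℓ.succAbove).det := by
  set BB : Matrix (Fin (m+3)) (Fin (m+3)) R := Matrix.of fun i j : Fin (m+3) =>
        Fin.lastCases
          (Fin.lastCases (0 : R) (fun j' : Fin (m+2) => y j') j)
          (fun i' : Fin (m+2) =>
            Fin.lastCases (if i' = (0 : Fin (m+2)) then (1 : R) else 0)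
              (fun j' : Fin (m+2) =>
                if i' = (0 : Fin (m+2)) ∧ j' = Fin.last (m+1) then M i' j' - b else M i' j') j)
          i with hBB
  have lc : ∀ (i : Fin (m+2)) (z : R) (f : Fin (m+2) → R),
      Fin.lastCases z f (i.castSucc : Fin (m+3)) = f i := fun i z f => Fin.lastCases_castSucc ..
  have lcl : ∀ (z : R) (f : Fin (m+2) → R),
      Fin.lastCases z f (Fin.last (m+2)) = z := fun z f => Fin.lastCases_last ..
  have e1 : ∀ i : Fin (m+2), i ≠ 0 → (charmatrix BB) i.castSucc (Fin.last (m+2)) = 0 := by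
    intro i hi
    rw [charmatrix_apply, diagonal_apply_ne _ (Fin.castSucc_lt_last i).ne, hBB, of_apply,
      lc, lcl, if_neg hi]
    simp
  have e2 : (charmatrix BB) ((0:Fin (m+2)).castSucc) (Fin.last (m+2)) = -1 := by
    rw [charmatrix_apply, diagonal_apply_ne _ (Fin.castSucc_lt_last _).ne, hBB, of_apply,
      lc, lcl, if_pos rfl]
    simp
  have e3 : (charmatrix BB) (Fin.last (m+2)) (Fin.last (m+2)) = X := by
    rw [charmatrix_apply, diagonal_apply_eq, hBB, of_apply, lcl, lcl]
    simp
  have e4 : ∀ (i j : Fin (m+2)), i ≠ 0 → (charmatrix BB) i.castSucc j.castSucc = charmatrix M i j := by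
    intro i j hi
    rw [charmatrix_apply, charmatrix_apply, hBB, of_apply, lc, lc,
      if_neg (by simp [hi]), Matrix.diagonal_apply, Matrix.diagonal_apply, if_congr Fin.castSucc_inj rfl rfl]
  have e5 : ∀ j : Fin (m+2), (charmatrix BB) ((0:Fin (m+2)).castSucc) j.castSucc
      = charmatrix M 0 j + if j = Fin.last (m+1) then C b else 0 := by
    intro j
    rw [charmatrix_apply, charmatrix_apply, hBB, of_apply, lc, lc,
      Matrix.diagonal_apply, Matrix.diagonal_apply, if_congr Fin.castSucc_inj rfl rfl]
    rcases eq_or_ne j (Fin.last (m+1)) with h | h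
    · subst h
      simp only [and_self, if_true, map_sub]
      ring
    · simp [h]
  have e6 : ∀ j : Fin (m+2), (charmatrix BB) (Fin.last (m+2)) j.castSucc = -C (y j) := by
    intro j
    rw [charmatrix_apply, diagonal_apply_ne _ (Fin.castSucc_lt_last j).ne', hBB, of_apply, lcl, lc]
    simp
  have negpow : ∀ a c : ℕ, a % 2 = c % 2 → ((-1 : Polynomial R)) ^ a = (-1) ^ c := by
    intro a c h
    rw [← Nat.div_add_mod a 2, ← Nat.div_add_mod c 2, h, pow_add, pow_add,
      pow_mul, pow_mul, neg_one_sq, one_pow, one_pow]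
  -- the (last,last) minor
  have hPmain : ((charmatrix BB).submatrix Fin.castSucc Fin.castSucc).det
      = (charmatrix M).det + (-1 : Polynomial R)^(m+1) * C b *
        ((charmatrix M).submatrix (0 : Fin (m+2)).succAbove (Fin.last (m+1)).succAbove).det := by
    have hsub : ∀ l : Fin (m+2),
        ((charmatrix BB).submatrix Fin.castSucc Fin.castSucc).submatrix
            (0:Fin (m+2)).succAbove l.succAbove
          = (charmatrix M).submatrix (0:Fin (m+2)).succAbove l.succAbove := by
      intro l
      refine Matrix.ext fun k l' => ?_
      simp only [Matrix.submatrix_apply, Fin.succAbove_zero]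
      exact e4 _ _ (Fin.succ_ne_zero k)
    rw [Matrix.det_succ_row ((charmatrix BB).submatrix Fin.castSucc Fin.castSucc) 0,
        Matrix.det_succ_row (charmatrix M) 0]
    have step : ∀ l : Fin (m+2),
        (-1 : Polynomial R)^(((0:Fin (m+2)):ℕ) + l) *
            ((charmatrix BB).submatrix Fin.castSucc Fin.castSucc) 0 l *
            (((charmatrix BB).submatrix Fin.castSucc Fin.castSucc).submatrix
              (0:Fin (m+2)).succAbove l.succAbove).det
        = (-1 : Polynomial R)^(((0:Fin (m+2)):ℕ) + l) * charmatrix M 0 l *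
            ((charmatrix M).submatrix (0:Fin (m+2)).succAbove l.succAbove).det
          + (if l = Fin.last (m+1) then (-1 : Polynomial R)^(m+1) * C b *
              ((charmatrix M).submatrix (0:Fin (m+2)).succAbove (Fin.last (m+1)).succAbove).det
             else 0) := by
      intro l
      have h0 : ((charmatrix BB).submatrix Fin.castSucc Fin.castSucc) 0 l
          = charmatrix M 0 l + if l = Fin.last (m+1) then C b else 0 := e5 l
      rw [hsub, h0]
      rcases eq_or_ne l (Fin.last (m+1)) with h | h
      · subst h
        simp only [if_pos rfl, eq_self_iff_true, if_true, Fin.val_zero, Fin.val_last, zero_add]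
        ring
      · simp only [if_neg h, add_zero]
    rw [Finset.sum_congr rfl (fun l _ => step l), Finset.sum_add_distrib]
    congr 1
    simp
  -- the (first row, last column) minor
  have hN : ((charmatrix BB).submatrix Fin.succ Fin.castSucc).det
      = ∑ l : Fin (m+2), (-1 : Polynomial R)^((m+1) + (l:ℕ)) * (-C (y l)) *
          ((charmatrix M).submatrix (0:Fin (m+2)).succAbove l.succAbove).det := by
    rw [Matrix.det_succ_row ((charmatrix BB).submatrix Fin.succ Fin.castSucc) (Fin.last (m+1))]
    refine Finset.sum_congr rfl fun l _ => ?_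
    have h1 : ((charmatrix BB).submatrix Fin.succ Fin.castSucc) (Fin.last (m+1)) l = -C (y l) := by
      rw [Matrix.submatrix_apply, Fin.succ_last]
      exact e6 l
    have h2 : ((charmatrix BB).submatrix Fin.succ Fin.castSucc).submatrix
          (Fin.last (m+1)).succAbove l.succAbove
        = (charmatrix M).submatrix (0:Fin (m+2)).succAbove l.succAbove := by
      refine Matrix.ext fun k l' => ?_
      simp only [Matrix.submatrix_apply, Fin.succAbove_last, Fin.succAbove_zero]
      rw [Fin.succ_castSucc]
      exact e4 _ _ (Fin.succ_ne_zero k)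
    rw [h1, h2, Fin.val_last]
  -- main expansion
  rw [show BB.charpoly = (charmatrix BB).det from rfl,
      Matrix.det_succ_column (charmatrix BB) (Fin.last (m+2)), Fin.sum_univ_castSucc,
      Fin.sum_univ_succ]
  have tail : ∀ k : Fin (m+1),
      (-1 : Polynomial R)^(((Fin.castSucc (Fin.succ k)):ℕ) + (Fin.last (m+2) : ℕ)) *
          (charmatrix BB) (Fin.castSucc (Fin.succ k)) (Fin.last (m+2)) *
          ((charmatrix BB).submatrix (Fin.castSucc (Fin.succ k)).succAbove
            (Fin.last (m+2)).succAbove).det = 0 := by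
    intro k
    rw [e1 _ (Fin.succ_ne_zero k)]
    ring
  rw [Finset.sum_congr rfl (fun k _ => tail k), Finset.sum_const_zero, add_zero]
  have hc0 : ((Fin.castSucc (0 : Fin (m+2))) : Fin (m+3)).succAbove = Fin.succ := by
    rw [Fin.castSucc_zero, Fin.succAbove_zero]
  rw [e2, e3, hc0, Fin.succAbove_last, hN, hPmain]
  simp only [Fin.coe_castSucc, Fin.val_zero, Fin.val_last, zero_add]
  rw [mul_comm ((-1 : Polynomial R) ^ (m+2)) (-1 : Polynomial R)]
  rw [mul_assoc, Finset.mul_sum, Finset.mul_sum]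
  have perterm : ∀ l : Fin (m+2),
      (-1 : Polynomial R) * ((-1 : Polynomial R)^(m+2) *
        ((-1 : Polynomial R)^((m+1) + (l:ℕ)) * (-C (y l)) *
          ((charmatrix M).submatrix (0:Fin (m+2)).succAbove l.succAbove).det))
      = (-1 : Polynomial R)^((l:ℕ) + 1) * C (y l) *
          ((charmatrix M).submatrix (0:Fin (m+2)).succAbove l.succAbove).det := by
    intro l
    have key : (-1 : Polynomial R) * ((-1 : Polynomial R)^(m+2) *
        ((-1 : Polynomial R)^((m+1) + (l:ℕ)) * (-1))) = (-1 : Polynomial R)^((l:ℕ) + 1) := by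
      have : (-1 : Polynomial R)^1 * ((-1 : Polynomial R)^(m+2) *
          ((-1 : Polynomial R)^((m+1) + (l:ℕ)) * (-1 : Polynomial R)^1))
          = (-1 : Polynomial R)^(1 + ((m+2) + (((m+1) + (l:ℕ)) + 1))) := by
        rw [← pow_add, ← pow_add, ← pow_add]
      rw [pow_one] at this
      rw [this]
      exact negpow _ _ (by omega)
    linear_combination (((charmatrix M).submatrix (0:Fin (m+2)).succAbove l.succAbove).det *
      C (y l)) * key
  rw [Finset.sum_congr rfl (fun l _ => perterm l)]
  have s1 : (-1 : Polynomial R)^((m+2) + (m+2)) = 1 := negpow _ 0 (by omega)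
  have s2 : (-1 : Polynomial R)^((m+2) + 1) = (-1 : Polynomial R)^(m+1) := negpow _ _ (by omega)
  rw [s1, s2, show M.charpoly = (charmatrix M).det from rfl]
  ring
end

section
/- For every n ≥ 4, the n×n real matrix B with entries of magnitude 0 or 1 defined by: row 1 = e_2; row 2 = −e_2 + e_3; row 3 = e_1 + e_4; row i = e_1 − e_3 + e_{i+1} for 4 ≤ i ≤ n−1; and row n = e_1 − e_3 + e_n (where e_j denotes the j-th standard basis row vector of length n) is nilpotent, i.e., B^n = 0. -/
open Matrix

/-- The order-`n` real matrix `B` (entries `±1, 0`), for `n ≥ 4`: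
row 1 = `(0,+,0,…)`; row 2 = `(0,−,+,0,…)`; row 3 = `(+,0,0,+,0,…)`;
row `i` (for `4 ≤ i ≤ n−1`) = `(+,0,−,0,…)` with `+` in column `i+1`;
row `n` = `(+,0,−,0,…,0,+)` with `+` in column `n` (1-based indices). -/
def patternB (n : ℕ) : Matrix (Fin n) (Fin n) ℝ :=
  Matrix.of fun i j =>
    if (i : ℕ) = 0 then (if (j : ℕ) = 1 then 1 else 0)
    else if (i : ℕ) = 1 then (if (j : ℕ) = 1 then -1 else if (j : ℕ) = 2 then 1 else 0)
    else if (i : ℕ) = 2 then (if (j : ℕ) = 0 then 1 else if (j : ℕ) = 3 then 1 else 0)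
    else (if (j : ℕ) = 0 then 1 else if (j : ℕ) = 2 then -1
      else if (j : ℕ) = min ((i : ℕ) + 1) (n - 1) then 1 else 0)

/-!
The rows `e₀, …, e_{n-1}` of the identity span the space of row vectors, so `B ^ n = 0` as soon as
each `eₖ` is killed by `B ^ n`; and the row vectors killed by `B ^ n` form a `B`-invariant subspace.
Reading off the rows of `B`, `e₁ = e₀ B`, `e₂ = e₁ B + e₁`, `e₃ = e₂ B - e₀` and
`e_{k+1} = eₖ B - e₀ + e₂` for `3 ≤ k ≤ n - 2`, so everything reduces to `e₀ Bⁿ = 0`.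
That holds because `e₀ B⁴ = e₄ - e₃` and then `(e_{k+1} - eₖ) B = e_{k+2} - e_{k+1}`; with
indices capped at `n - 1`, as in the last row of `B`, the chain of differences
ends at `e_{n-1} - e_{n-1} = 0`.
-/

theorem Matrix.vecMul_mem_ker_vecMulLinear_pow {ι R : Type*} [Fintype ι] [DecidableEq ι]
    [Semiring R] {A : Matrix ι ι R} {m : ℕ} {x : ι → R}
    (hx : x ∈ LinearMap.ker (A ^ m).vecMulLinear) :
    x ᵥ* A ∈ LinearMap.ker (A ^ m).vecMulLinear := by
  simp only [LinearMap.mem_ker, vecMulLinear_apply] at hx ⊢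
  rw [vecMul_vecMul, ← pow_succ', pow_succ, ← vecMul_vecMul, hx, zero_vecMul]

namespace patternB

variable {n : ℕ}

/-- The `k`-th unit row vector, taken to be `0` when `k ≥ n`. -/
def unitRow (n k : ℕ) : Fin n → ℝ := fun j => if (j : ℕ) = k then 1 else 0

theorem unitRow_val (i : Fin n) : unitRow n i = Pi.single i 1 := by
  funext j
  simp [unitRow, Pi.single_apply, Fin.ext_iff]

theorem unitRow_vecMul {k : ℕ} (hk : k < n) (M : Matrix (Fin n) (Fin n) ℝ) :
    unitRow n k ᵥ* M = M ⟨k, hk⟩ := by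
  simpa only [← unitRow_val, row] using single_one_vecMul (⟨k, hk⟩ : Fin n) M

theorem unitRow_zero_vecMul (hn : 0 < n) : unitRow n 0 ᵥ* patternB n = unitRow n 1 := by
  rw [unitRow_vecMul hn]
  funext j
  simp only [patternB, of_apply, unitRow]
  split_ifs <;> first | contradiction | omega | norm_num

theorem unitRow_one_vecMul (hn : 1 < n) :
    unitRow n 1 ᵥ* patternB n = unitRow n 2 - unitRow n 1 := by
  rw [unitRow_vecMul hn]
  funext j
  simp only [patternB, of_apply, unitRow, Pi.sub_apply]
  split_ifs <;> first | contradiction | omega | norm_num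

theorem unitRow_two_vecMul (hn : 2 < n) :
    unitRow n 2 ᵥ* patternB n = unitRow n 0 + unitRow n 3 := by
  rw [unitRow_vecMul hn]
  funext j
  simp only [patternB, of_apply, unitRow, Pi.add_apply]
  split_ifs <;> first | contradiction | omega | norm_num

theorem unitRow_vecMul_of_three_le {k : ℕ} (hk : 3 ≤ k) (hkn : k < n) :
    unitRow n k ᵥ* patternB n = unitRow n 0 - unitRow n 2 + unitRow n (min (k + 1) (n - 1)) := by
  rw [unitRow_vecMul hkn]
  funext j
  simp only [patternB, of_apply, unitRow, Pi.add_apply, Pi.sub_apply]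
  split_ifs <;> first | contradiction | omega | norm_num

def diffRow (n k : ℕ) : Fin n → ℝ := unitRow n (min (k + 1) (n - 1)) - unitRow n (min k (n - 1))

theorem diffRow_vecMul (hn : 3 < n) {k : ℕ} (hk : 3 ≤ k) :
    diffRow n k ᵥ* patternB n = diffRow n (k + 1) := by
  rw [diffRow, sub_vecMul, unitRow_vecMul_of_three_le (by omega) (by omega),
    unitRow_vecMul_of_three_le (by omega) (by omega), diffRow,
    show min (min (k + 1) (n - 1) + 1) (n - 1) = min (k + 1 + 1) (n - 1) by omega,
    show min (min k (n - 1) + 1) (n - 1) = min (k + 1) (n - 1) by omega]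
  abel

theorem diffRow_vecMul_pow (hn : 3 < n) {k : ℕ} (hk : 3 ≤ k) (j : ℕ) :
    diffRow n k ᵥ* patternB n ^ j = diffRow n (k + j) := by
  induction j with
  | zero => simp
  | succ j ih =>
    rw [pow_succ, ← vecMul_vecMul, ih, diffRow_vecMul hn (by omega), add_assoc]

theorem unitRow_zero_vecMul_pow_four (hn : 3 < n) :
    unitRow n 0 ᵥ* patternB n ^ 4 = diffRow n 3 := by
  simp only [pow_succ, pow_zero, one_mul, ← vecMul_vecMul, add_vecMul, sub_vecMul,
    unitRow_zero_vecMul (by omega : 0 < n), unitRow_one_vecMul (by omega : 1 < n),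
    unitRow_two_vecMul (by omega : 2 < n), unitRow_vecMul_of_three_le le_rfl hn, diffRow,
    show min 3 (n - 1) = 3 by omega]
  abel

theorem unitRow_zero_vecMul_pow_self (hn : 3 < n) : unitRow n 0 ᵥ* patternB n ^ n = 0 := by
  obtain ⟨m, rfl⟩ : ∃ m, n = 4 + m := ⟨n - 4, by omega⟩
  rw [pow_add, ← vecMul_vecMul, unitRow_zero_vecMul_pow_four hn, diffRow_vecMul_pow hn le_rfl,
    diffRow, show min (3 + m + 1) (4 + m - 1) = min (3 + m) (4 + m - 1) by omega, sub_self]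

theorem unitRow_mem_ker_vecMulLinear_pow_self (hn : 3 < n) :
    ∀ k < n, unitRow n k ∈ LinearMap.ker (patternB n ^ n).vecMulLinear := by
  set K := LinearMap.ker (patternB n ^ n).vecMulLinear
  have hB {x} (hx : x ∈ K) : x ᵥ* patternB n ∈ K := vecMul_mem_ker_vecMulLinear_pow hx
  intro k
  induction k using Nat.strong_induction_on with
  | _ k ih =>
    intro hk
    match k with
    | 0 => exact unitRow_zero_vecMul_pow_self hn
    | 1 =>
      rw [← unitRow_zero_vecMul (by omega)]
      exact hB (ih 0 (by omega) (by omega))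
    | 2 =>
      rw [show unitRow n 2 = unitRow n 1 ᵥ* patternB n + unitRow n 1 by
        rw [unitRow_one_vecMul (by omega)]; abel]
      exact K.add_mem (hB (ih 1 (by omega) (by omega))) (ih 1 (by omega) (by omega))
    | 3 =>
      rw [show unitRow n 3 = unitRow n 2 ᵥ* patternB n - unitRow n 0 by
        rw [unitRow_two_vecMul (by omega)]; abel]
      exact K.sub_mem (hB (ih 2 (by omega) (by omega))) (ih 0 (by omega) (by omega))
    | m + 4 =>
      rw [show unitRow n (m + 4) = unitRow n (m + 3) ᵥ* patternB n - unitRow n 0 + unitRow n 2 by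
        rw [unitRow_vecMul_of_three_le (by omega) (by omega),
          show min (m + 3 + 1) (n - 1) = m + 4 by omega]; abel]
      exact K.add_mem
        (K.sub_mem (hB (ih (m + 3) (by omega) (by omega))) (ih 0 (by omega) (by omega)))
        (ih 2 (by omega) (by omega))

end patternB

/-- For `n ≥ 4`, the magnitude-one realization of `B_n` is nilpotent:
its `n`-th power is zero. -/
theorem statement12 (n : ℕ) (hn : 4 ≤ n) : (patternB n) ^ n = 0 := by
  refine ext_of_single_vecMul fun i => ?_
  rw [vecMul_zero, ← patternB.unitRow_val]
  exact patternB.unitRow_mem_ker_vecMulLinear_pow_self hn i i.isLt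
end
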